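/- arXiv:1408.3040 — 2 statements merged into one kernel-verified Lean document; each statement's English description precedes it below -/
import Mathlib

section
/- For every T > 0, the mixed partial derivative ∂_T ∂_S² ∂_U² F(S,T,U) evaluated at S = U = 0 equals 2·(log C)'''(T). (This is the coincidence-limit identity ∂_S ∂_U applied to the three-point density ∂_S∂_T∂_U F, evaluated at S = U = 0, equals the value of that density at (0,T,0) interpreted as 2·(log C)'''(T).) -/
/-!
Where `C` does not vanish, `C² = exp (2 log C)`; hence `F_even = exp (2 Ψ) / Σ²` with
`Ψ(S,T,U) = ℓ S + ℓ T + ℓ U + ℓ (S+T+U) - ℓ (S+T) - ℓ (T+U) - ℓ (U+S)` for `ℓ = log C`, and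
`Ψ(S,T,0) = ℓ 0`, while `F_odd` carries the factor `sinh² (ΣU)`. Writing
`δf(S,T) = f (S+T) - f S - f T + f 0`, this gives
`∂_U² F|_{U=0} = 2 δℓ'' + 4 (δℓ')² + 2Σ² (F_odd / sinh² (ΣU))|_{U=0}`, and the same two
mechanisms (`δf(0,T) = 0`, the factor `sinh² (ΣS)`) give `∂_S²` of this at `S = 0`:
`2 (ℓ'''' T - ℓ'''' 0) + 8 (ℓ'' T - ℓ'' 0)² + 4 (α² - Σ²)² sinh² (ΣT) Ĉ(T)² / C(T)⁴`.
Now `ℓ'' = Σ² (Σ² - α²) / C²` obeys the Riccati relation `ℓ'' = Σ² - ℓ'²`, so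
`ℓ'''' = 4Σ² ℓ'' - 6 ℓ''²`, and `sinh (ΣT) Ĉ(T) = C(T)² - Σ²`. For `Σ² = 3α²/2 - 1/8` the whole
expression collapses to `2 (ℓ'' T - ℓ'' 0)`, whose `T`-derivative is `2 ℓ'''`.
-/

open Real MeasureTheory Filter

/-- `Σ = √(3α²/2 − 1/8)`. -/
noncomputable def Sg (α : ℝ) : ℝ := Real.sqrt (3 * α ^ 2 / 2 - 1 / 8)

/-- `C(T) = Σ·cosh(ΣT) + α·sinh(ΣT)`. -/
noncomputable def Cg (α : ℝ) (T : ℝ) : ℝ :=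
  Sg α * Real.cosh (Sg α * T) + α * Real.sinh (Sg α * T)

/-- `Ĉ(T) = 2αΣ·cosh(ΣT) + (α²+Σ²)·sinh(ΣT)`. -/
noncomputable def Chat (α : ℝ) (T : ℝ) : ℝ :=
  2 * α * Sg α * Real.cosh (Sg α * T) + (α ^ 2 + Sg α ^ 2) * Real.sinh (Sg α * T)

/-- The even part of the three-point generating function. -/
noncomputable def Feven (α : ℝ) (S T U : ℝ) : ℝ :=
  (1 / Sg α ^ 2) * (Cg α S ^ 2 * Cg α T ^ 2 * Cg α U ^ 2 * Cg α (S + T + U) ^ 2)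
    / (Cg α (S + T) ^ 2 * Cg α (T + U) ^ 2 * Cg α (U + S) ^ 2)

/-- The odd part of the three-point generating function. -/
noncomputable def Fodd (α : ℝ) (S T U : ℝ) : ℝ :=
  ((α ^ 2 - Sg α ^ 2) ^ 2 / Sg α ^ 2) *
    (Real.sinh (Sg α * S) ^ 2 * Real.sinh (Sg α * T) ^ 2 * Real.sinh (Sg α * U) ^ 2
      * Chat α (S + T + U) ^ 2)
    / (Cg α (S + T) ^ 2 * Cg α (T + U) ^ 2 * Cg α (U + S) ^ 2)

/-- `F = F_even + F_odd`. -/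
noncomputable def Fg (α : ℝ) (S T U : ℝ) : ℝ := Feven α S T U + Fodd α S T U

open Topology

section Calculus

lemma hasDerivAt_sinh_const_mul (s x : ℝ) :
    HasDerivAt (fun y => sinh (s * y)) (s * cosh (s * x)) x := by
  simpa [mul_comm] using ((hasDerivAt_id x).const_mul s).sinh

lemma hasDerivAt_cosh_const_mul (s x : ℝ) :
    HasDerivAt (fun y => cosh (s * y)) (s * sinh (s * x)) x := by
  simpa [mul_comm] using ((hasDerivAt_id x).const_mul s).cosh

lemma exp_two_mul_log {y : ℝ} (hy : y ≠ 0) : exp (2 * log y) = y ^ 2 := by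
  rw [two_mul, exp_add, exp_log_eq_abs hy, ← sq, sq_abs]

variable {f g f' : ℝ → ℝ} {x a : ℝ}

lemma iteratedDeriv_two_eq_of_hasDerivAt (hf : ∀ᶠ y in 𝓝 x, HasDerivAt f (f' y) y)
    (hf' : HasDerivAt f' a x) : iteratedDeriv 2 f x = a := by
  have hderiv : deriv f =ᶠ[𝓝 x] f' := hf.mono fun _ hy => hy.deriv
  rw [iteratedDeriv_succ, iteratedDeriv_one, hderiv.deriv_eq, hf'.deriv]

lemma iteratedDeriv_two_exp_comp (hg : ∀ᶠ y in 𝓝 x, HasDerivAt g (f' y) y)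
    (hg' : HasDerivAt f' a x) :
    iteratedDeriv 2 (fun y => exp (g y)) x = exp (g x) * (a + f' x ^ 2) :=
  iteratedDeriv_two_eq_of_hasDerivAt (hg.mono fun _ hy => hy.exp)
    ((hg.self_of_nhds.exp.mul hg').congr_deriv (by ring))

lemma iteratedDeriv_two_sq_mul_of_eq_zero (hf : ContDiffAt ℝ 2 f x) (hg : ContDiffAt ℝ 2 g x)
    (hfx : f x = 0) : iteratedDeriv 2 (fun y => f y ^ 2 * g y) x = 2 * deriv f x ^ 2 * g x := by
  have hf1 : ContDiffAt ℝ 1 f x := hf.of_le one_le_two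
  simp only [sq]
  rw [iteratedDeriv_fun_mul (hf.mul hf) hg]
  simp only [Finset.sum_range_succ, Finset.sum_range_zero, iteratedDeriv_fun_mul hf1 hf1,
    iteratedDeriv_fun_mul hf hf, iteratedDeriv_zero, iteratedDeriv_one]
  norm_num
  rw [hfx]
  ring

lemma iteratedDeriv_two_sq_of_eq_zero (hf : ContDiffAt ℝ 2 f x) (hfx : f x = 0) :
    iteratedDeriv 2 (fun y => f y ^ 2) x = 2 * deriv f x ^ 2 := by
  simpa using iteratedDeriv_two_sq_mul_of_eq_zero hf contDiffAt_const hfx (g := fun _ => 1)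

lemma iteratedDeriv_two_sinh_sq_mul (s : ℝ) (hg : ContDiffAt ℝ 2 g 0) :
    iteratedDeriv 2 (fun y => sinh (s * y) ^ 2 * g y) 0 = 2 * s ^ 2 * g 0 := by
  rw [iteratedDeriv_two_sq_mul_of_eq_zero (by fun_prop) hg (by simp),
    (hasDerivAt_sinh_const_mul s 0).deriv]
  simp

end Calculus

section ThreePoint

variable {f f' : ℝ → ℝ} {S T U : ℝ}

def threePoint (f : ℝ → ℝ) (S T U : ℝ) : ℝ :=
  f S + f T + f U + f (S + T + U) - f (S + T) - f (T + U) - f (U + S)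

def mixedDiff (f : ℝ → ℝ) (S T : ℝ) : ℝ := f (S + T) - f S - (f T - f 0)

lemma hasDerivAt_threePoint (hU : HasDerivAt f (f' U) U)
    (hSTU : HasDerivAt f (f' (S + T + U)) (S + T + U)) (hTU : HasDerivAt f (f' (T + U)) (T + U))
    (hUS : HasDerivAt f (f' (U + S)) (U + S)) :
    HasDerivAt (threePoint f S T) (threePoint f' S T U - (f' S + f' T - f' (S + T))) U := by
  rw [show threePoint f S T = fun u =>
      f S + f T + f u + f (S + T + u) - f (T + u) - f (u + S) - f (S + T) from
    funext fun u => by unfold threePoint; ring]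
  exact (((((hU.const_add _).add (hSTU.comp_const_add _ _)).sub (hTU.comp_const_add _ _)).sub
    (hUS.comp_add_const _ _)).sub_const _).congr_deriv (by unfold threePoint; ring)

lemma threePoint_zero (f : ℝ → ℝ) (S T : ℝ) : threePoint f S T 0 = f 0 := by
  simp [threePoint]; ring

lemma threePoint_zero_sub_eq_mixedDiff (f : ℝ → ℝ) (S T : ℝ) :
    threePoint f S T 0 - (f S + f T - f (S + T)) = mixedDiff f S T := by
  simp [threePoint, mixedDiff]; ring

lemma iteratedDeriv_mixedDiff {n : ℕ} (hn : n ≠ 0) (hT : ContDiffAt ℝ n f T)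
    (h0 : ContDiffAt ℝ n f 0) :
    iteratedDeriv n (fun S => mixedDiff f S T) 0 = iteratedDeriv n f T - iteratedDeriv n f 0 := by
  have hshift : ContDiffAt ℝ n (fun S => f (S + T)) 0 :=
    (zero_add T ▸ hT).comp 0 (contDiffAt_id.add contDiffAt_const)
  unfold mixedDiff
  rw [iteratedDeriv_fun_sub (hshift.sub h0) contDiffAt_const, iteratedDeriv_fun_sub hshift h0,
    iteratedDeriv_comp_add_const, iteratedDeriv_const, if_neg hn, sub_zero]
  simp

end ThreePoint

section Cg

variable (α : ℝ) {x : ℝ}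

noncomputable def Cg' (x : ℝ) : ℝ := α * Sg α * cosh (Sg α * x) + Sg α ^ 2 * sinh (Sg α * x)

@[fun_prop]
lemma contDiff_Cg {n : WithTop ℕ∞} : ContDiff ℝ n (Cg α) := by
  unfold Cg; fun_prop

@[fun_prop]
lemma contDiff_Cg' {n : WithTop ℕ∞} : ContDiff ℝ n (Cg' α) := by
  unfold Cg'; fun_prop

@[fun_prop]
lemma contDiff_Chat {n : WithTop ℕ∞} : ContDiff ℝ n (Chat α) := by
  unfold Chat; fun_prop

lemma hasDerivAt_Cg (x : ℝ) : HasDerivAt (Cg α) (Cg' α x) x :=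
  (((hasDerivAt_cosh_const_mul _ x).const_mul _).add
    ((hasDerivAt_sinh_const_mul _ x).const_mul α)).congr_deriv (by unfold Cg'; ring)

lemma hasDerivAt_Cg' (x : ℝ) : HasDerivAt (Cg' α) (Sg α ^ 2 * Cg α x) x :=
  (((hasDerivAt_cosh_const_mul _ x).const_mul _).add
    ((hasDerivAt_sinh_const_mul _ x).const_mul _)).congr_deriv (by unfold Cg; ring)

lemma Cg_zero : Cg α 0 = Sg α := by simp [Cg]

lemma Sg_sq_mul_Cg_sq_sub_Cg'_sq (x : ℝ) :
    Sg α ^ 2 * Cg α x ^ 2 - Cg' α x ^ 2 = Sg α ^ 2 * (Sg α ^ 2 - α ^ 2) := by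
  unfold Cg Cg'
  linear_combination Sg α ^ 2 * (Sg α ^ 2 - α ^ 2) * cosh_sq_sub_sinh_sq (Sg α * x)

lemma sinh_mul_Chat (x : ℝ) : sinh (Sg α * x) * Chat α x = Cg α x ^ 2 - Sg α ^ 2 := by
  unfold Cg Chat
  linear_combination -Sg α ^ 2 * cosh_sq_sub_sinh_sq (Sg α * x)

noncomputable def dlogCg (x : ℝ) : ℝ := Cg' α x / Cg α x

-- `(log C)''`, in closed form thanks to the invariant `Σ² C² − C'² = Σ² (Σ² − α²)`
noncomputable def d2logCg (x : ℝ) : ℝ := Sg α ^ 2 * (Sg α ^ 2 - α ^ 2) / Cg α x ^ 2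

lemma hasDerivAt_log_Cg (hx : Cg α x ≠ 0) :
    HasDerivAt (fun y => log (Cg α y)) (dlogCg α x) x :=
  (hasDerivAt_Cg α x).log hx

lemma hasDerivAt_dlogCg (hx : Cg α x ≠ 0) : HasDerivAt (dlogCg α) (d2logCg α x) x :=
  ((hasDerivAt_Cg' α x).div (hasDerivAt_Cg α x) hx).congr_deriv (by
    unfold d2logCg
    rw [← Sg_sq_mul_Cg_sq_sub_Cg'_sq]
    ring)

lemma d2logCg_eq_sub_sq (hx : Cg α x ≠ 0) : d2logCg α x = Sg α ^ 2 - dlogCg α x ^ 2 := by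
  unfold d2logCg dlogCg
  rw [← Sg_sq_mul_Cg_sq_sub_Cg'_sq]
  field_simp

lemma hasDerivAt_d2logCg (hx : Cg α x ≠ 0) :
    HasDerivAt (d2logCg α) (-2 * dlogCg α x * d2logCg α x) x :=
  ((hasDerivAt_const x _).div ((hasDerivAt_Cg α x).pow 2) (pow_ne_zero 2 hx)).congr_deriv (by
    simp only [d2logCg, dlogCg, Pi.pow_apply]
    field_simp
    ring)

@[fun_prop]
lemma contDiffAt_dlogCg {n : WithTop ℕ∞} (hx : Cg α x ≠ 0) : ContDiffAt ℝ n (dlogCg α) x := by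
  unfold dlogCg; fun_prop (disch := exact hx)

@[fun_prop]
lemma contDiffAt_d2logCg {n : WithTop ℕ∞} (hx : Cg α x ≠ 0) : ContDiffAt ℝ n (d2logCg α) x := by
  unfold d2logCg; fun_prop (disch := exact pow_ne_zero 2 hx)

lemma eventually_Cg_ne_zero (hx : Cg α x ≠ 0) : ∀ᶠ y in 𝓝 x, Cg α y ≠ 0 :=
  (contDiff_Cg α (n := 0)).continuous.continuousAt.eventually_ne hx

lemma iteratedDeriv_two_log_Cg (hx : Cg α x ≠ 0) :
    iteratedDeriv 2 (fun y => log (Cg α y)) x = d2logCg α x :=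
  iteratedDeriv_two_eq_of_hasDerivAt
    ((eventually_Cg_ne_zero α hx).mono fun _ hy => hasDerivAt_log_Cg α hy)
    (hasDerivAt_dlogCg α hx)

lemma iteratedDeriv_two_d2logCg (hx : Cg α x ≠ 0) :
    iteratedDeriv 2 (d2logCg α) x = 4 * Sg α ^ 2 * d2logCg α x - 6 * d2logCg α x ^ 2 := by
  rw [iteratedDeriv_two_eq_of_hasDerivAt
    ((eventually_Cg_ne_zero α hx).mono fun _ hy => hasDerivAt_d2logCg α hy)
    (((hasDerivAt_dlogCg α hx).const_mul (-2)).mul (hasDerivAt_d2logCg α hx))]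
  rw [d2logCg_eq_sub_sq α hx]
  ring

variable {S T U : ℝ}

lemma eventually_Cg_const_add_ne_zero {a : ℝ} (ha : Cg α a ≠ 0) :
    ∀ᶠ u in 𝓝 (0 : ℝ), Cg α (a + u) ≠ 0 :=
  ((contDiff_Cg α (n := 0)).continuous.comp (continuous_const_add a)).continuousAt.eventually_ne
    (by simpa using ha)

lemma eventually_Cg_shifts_ne_zero (h0 : Cg α 0 ≠ 0) (hS : Cg α S ≠ 0) (hT : Cg α T ≠ 0)
    (hST : Cg α (S + T) ≠ 0) :
    ∀ᶠ U in 𝓝 (0 : ℝ),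
      Cg α U ≠ 0 ∧ Cg α (S + T + U) ≠ 0 ∧ Cg α (T + U) ≠ 0 ∧ Cg α (U + S) ≠ 0 := by
  filter_upwards [eventually_Cg_const_add_ne_zero α h0, eventually_Cg_const_add_ne_zero α hST,
    eventually_Cg_const_add_ne_zero α hT, eventually_Cg_const_add_ne_zero α hS]
    with U h1 h2 h3 h4
  exact ⟨by simpa using h1, h2, h3, by rwa [add_comm]⟩

lemma Feven_eq_exp_threePoint (hS : Cg α S ≠ 0) (hT : Cg α T ≠ 0) (hU : Cg α U ≠ 0)
    (hSTU : Cg α (S + T + U) ≠ 0) (hST : Cg α (S + T) ≠ 0) (hTU : Cg α (T + U) ≠ 0)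
    (hUS : Cg α (U + S) ≠ 0) :
    Feven α S T U = exp (2 * threePoint (fun x => log (Cg α x)) S T U) / Sg α ^ 2 := by
  simp only [threePoint, mul_sub, mul_add, exp_sub, exp_add, exp_two_mul_log, *, ne_eq,
    not_false_eq_true, Feven]
  ring

noncomputable def FgUU (S T : ℝ) : ℝ :=
  2 * mixedDiff (d2logCg α) S T + 4 * mixedDiff (dlogCg α) S T ^ 2
    + 2 * (α ^ 2 - Sg α ^ 2) ^ 2 * sinh (Sg α * T) ^ 2 *
      (sinh (Sg α * S) ^ 2 * (Chat α (S + T) ^ 2 / (Cg α (S + T) ^ 2 * Cg α T ^ 2 * Cg α S ^ 2)))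

lemma iteratedDeriv_two_Fg_U (hs : Sg α ≠ 0) (hS : Cg α S ≠ 0) (hT : Cg α T ≠ 0)
    (hST : Cg α (S + T) ≠ 0) :
    iteratedDeriv 2 (fun U => Fg α S T U) 0 = FgUU α S T := by
  have h0 : Cg α 0 ≠ 0 := by rwa [Cg_zero]
  set H : ℝ → ℝ := fun U => (α ^ 2 - Sg α ^ 2) ^ 2 / Sg α ^ 2 * (sinh (Sg α * S) ^ 2 *
    sinh (Sg α * T) ^ 2 * Chat α (S + T + U) ^ 2 /
      (Cg α (S + T) ^ 2 * Cg α (T + U) ^ 2 * Cg α (U + S) ^ 2)) with hH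
  have hnear := eventually_Cg_shifts_ne_zero α h0 hS hT hST
  have hsplit : (fun U => Fg α S T U) =ᶠ[𝓝 0]
      fun U => exp (2 * threePoint (fun x => log (Cg α x)) S T U) / Sg α ^ 2
        + sinh (Sg α * U) ^ 2 * H U := by
    filter_upwards [hnear] with U ⟨hU, hSTU, hTU, hUS⟩
    rw [Fg, Feven_eq_exp_threePoint α hS hT hU hSTU hST hTU hUS, Fodd]
    ring
  have hlog : ∀ᶠ U in 𝓝 (0 : ℝ), HasDerivAt (fun U => 2 * threePoint (fun x => log (Cg α x)) S T U)
      (2 * (threePoint (dlogCg α) S T U - (dlogCg α S + dlogCg α T - dlogCg α (S + T)))) U := by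
    filter_upwards [hnear] with U ⟨hU, hSTU, hTU, hUS⟩
    exact (hasDerivAt_threePoint (hasDerivAt_log_Cg α hU) (hasDerivAt_log_Cg α hSTU)
      (hasDerivAt_log_Cg α hTU) (hasDerivAt_log_Cg α hUS)).const_mul 2
  have hdlog := ((hasDerivAt_threePoint (U := 0) (hasDerivAt_dlogCg α h0)
    (hasDerivAt_dlogCg α (by simpa using hST)) (hasDerivAt_dlogCg α (by simpa using hT))
    (hasDerivAt_dlogCg α (by simpa using hS))).sub_const
      (dlogCg α S + dlogCg α T - dlogCg α (S + T))).const_mul 2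
  have hcdH : ContDiffAt ℝ 2 H 0 := by
    simp only [hH]; fun_prop (disch := simp_all)
  have hcdlog : ContDiffAt ℝ 2 (threePoint (fun x => log (Cg α x)) S T) 0 := by
    unfold threePoint; fun_prop (disch := simp_all)
  rw [hsplit.iteratedDeriv_eq, iteratedDeriv_fun_add (by fun_prop) (by fun_prop),
    iteratedDeriv_div_const, iteratedDeriv_two_exp_comp hlog hdlog,
    iteratedDeriv_two_sinh_sq_mul _ hcdH,
    threePoint_zero, threePoint_zero_sub_eq_mixedDiff, threePoint_zero_sub_eq_mixedDiff, exp_two_mul_log h0, Cg_zero]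
  simp only [hH, FgUU, add_zero, zero_add]
  field_simp
  ring

lemma iteratedDeriv_two_FgUU (hα : Sg α ^ 2 = 3 * α ^ 2 / 2 - 1 / 8) (hs : Sg α ≠ 0)
    (hT : Cg α T ≠ 0) :
    iteratedDeriv 2 (fun S => FgUU α S T) 0 = 2 * (d2logCg α T - d2logCg α 0) := by
  have h0 : Cg α 0 ≠ 0 := by rwa [Cg_zero]
  have hL : deriv (fun S => mixedDiff (dlogCg α) S T) 0 = d2logCg α T - d2logCg α 0 := by
    rw [← iteratedDeriv_one, iteratedDeriv_mixedDiff one_ne_zero (by fun_prop (disch := exact hT))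
      (by fun_prop (disch := exact h0)), iteratedDeriv_one,
      (hasDerivAt_dlogCg α hT).deriv, (hasDerivAt_dlogCg α h0).deriv]
  have hcdM : ContDiffAt ℝ 2 (fun S => mixedDiff (d2logCg α) S T) 0 := by
    unfold mixedDiff; fun_prop (disch := simp_all)
  have hcdL : ContDiffAt ℝ 2 (fun S => mixedDiff (dlogCg α) S T) 0 := by
    unfold mixedDiff; fun_prop (disch := simp_all)
  have hcdR : ContDiffAt ℝ 2
      (fun S => Chat α (S + T) ^ 2 / (Cg α (S + T) ^ 2 * Cg α T ^ 2 * Cg α S ^ 2)) 0 := by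
    fun_prop (disch := simp_all)
  unfold FgUU
  rw [iteratedDeriv_fun_add (by fun_prop) (by fun_prop), iteratedDeriv_fun_add (by fun_prop)
    (by fun_prop), iteratedDeriv_const_mul_field, iteratedDeriv_const_mul_field,
    iteratedDeriv_const_mul_field, iteratedDeriv_mixedDiff two_ne_zero
      (by fun_prop (disch := exact hT)) (by fun_prop (disch := exact h0)),
    iteratedDeriv_two_sq_of_eq_zero hcdL (by simp [mixedDiff]), hL,
    iteratedDeriv_two_sinh_sq_mul _ hcdR, iteratedDeriv_two_d2logCg α hT,
    iteratedDeriv_two_d2logCg α h0, zero_add, Cg_zero]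
  have hsC : sinh (Sg α * T) ^ 2 * Chat α T ^ 2 = (Cg α T ^ 2 - Sg α ^ 2) ^ 2 := by
    rw [← sinh_mul_Chat]; ring
  unfold d2logCg
  rw [Cg_zero]
  field_simp
  -- the coefficient `4Σ² − 12(Σ² − α²) − 1` of `(log C)''` vanishes exactly when `hα` holds
  linear_combination 2 * (α ^ 2 - Sg α ^ 2) ^ 2 * hsC
    - 8 * (Sg α ^ 2 - α ^ 2) * Cg α T ^ 2 * (Sg α ^ 2 - Cg α T ^ 2) * hα

end Cg

section Positivity

variable {α : ℝ}

lemma three_mul_sq_div_two_sub_pos (h : 1 / (2 * √3) < α) : 0 < 3 * α ^ 2 / 2 - 1 / 8 := by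
  have h3 : √3 ^ 2 = 3 := sq_sqrt (by norm_num)
  have hpos : 0 < 2 * √3 := by positivity
  have h' : 1 < α * (2 * √3) := (div_lt_iff₀ hpos).mp h
  nlinarith [sq_nonneg (α * (2 * √3) - 1)]

lemma Cg_pos (hα : 0 ≤ α) (hs : 0 < Sg α) {x : ℝ} (hx : 0 ≤ x) : 0 < Cg α x :=
  add_pos_of_pos_of_nonneg (mul_pos hs (cosh_pos _))
    (mul_nonneg hα (sinh_nonneg_iff.mpr (mul_nonneg hs.le hx)))

end Positivity

theorem stmt10_general (α : ℝ) (h1 : 1 / (2 * Real.sqrt 3) < α) :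
    ∀ T : ℝ, 0 < T →
      deriv (fun T' =>
          iteratedDeriv 2 (fun S' => iteratedDeriv 2 (fun U' => Fg α S' T' U') 0) 0) T
        = 2 * iteratedDeriv 3 (fun x => Real.log (Cg α x)) T := by
  intro T hT
  have hrad := three_mul_sq_div_two_sub_pos h1
  have hα : Sg α ^ 2 = 3 * α ^ 2 / 2 - 1 / 8 := sq_sqrt hrad.le
  have hs : 0 < Sg α := sqrt_pos.mpr hrad
  have hCT : Cg α T ≠ 0 :=
    (Cg_pos ((div_pos one_pos (by positivity)).trans h1).le hs hT.le).ne'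
  have h0 : Cg α 0 ≠ 0 := by rw [Cg_zero]; exact hs.ne'
  have hmixed : (fun T' => iteratedDeriv 2
      (fun S' => iteratedDeriv 2 (fun U' => Fg α S' T' U') 0) 0) =ᶠ[𝓝 T]
      fun T' => 2 * (d2logCg α T' - d2logCg α 0) := by
    filter_upwards [eventually_Cg_ne_zero α hCT] with T' hT'
    rw [← iteratedDeriv_two_FgUU α hα hs.ne' hT']
    refine Filter.EventuallyEq.iteratedDeriv_eq 2 ?_
    filter_upwards [eventually_Cg_const_add_ne_zero α h0, eventually_Cg_const_add_ne_zero α hT']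
      with S hS hST
    rw [zero_add] at hS
    rw [add_comm] at hST
    exact iteratedDeriv_two_Fg_U α hs.ne' hS hT' hST
  have hlog : iteratedDeriv 2 (fun x => log (Cg α x)) =ᶠ[𝓝 T] d2logCg α :=
    (eventually_Cg_ne_zero α hCT).mono fun _ hx => iteratedDeriv_two_log_Cg α hx
  rw [hmixed.deriv_eq, iteratedDeriv_succ, hlog.deriv_eq,
    (((hasDerivAt_d2logCg α hCT).sub_const _).const_mul 2).deriv, (hasDerivAt_d2logCg α hCT).deriv]

/-- For `T > 0`, `∂_T ∂_S² ∂_U² F(S,T,U)|_{S=U=0} = 2·(log C)'''(T)`. -/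
theorem stmt10 (α : ℝ) (h1 : 1 / (2 * Real.sqrt 3) < α) (h2 : α < 1 / 2) :
    ∀ T : ℝ, 0 < T →
      deriv (fun T' =>
          iteratedDeriv 2 (fun S' => iteratedDeriv 2 (fun U' => Fg α S' T' U') 0) 0) T
        = 2 * iteratedDeriv 3 (fun x => Real.log (Cg α x)) T :=
  stmt10_general α h1
end

section
/- Set β = (α − Σ)/(α + Σ), so 0 < β < 1. For every w > 0 the integrals below converge and ∫₀^∞ e^{−wT} · (log C)''(T) dT = −2Σ · β^{−w/(2Σ)} · ∫₀^β x^{w/(2Σ)} / (1 − x)² dx. -/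
/-!
Since `Σ·cosh(ΣT) + α·sinh(ΣT) = ((α + Σ)/2)·e^{ΣT}·(1 − β e^{−2ΣT})` and `C'' = Σ² C`, one gets
`(log C)'' = (Σ²C² − C'²)/C² = Σ²(Σ² − α²)/C² = −4Σ² x/(1 − x)²` with `x = β e^{−2ΣT} ∈ (0, β)`.
Under the substitution `x = β e^{−2ΣT}` we have `dx = −2Σ x dT` and `e^{−wT} = β^{−c} x^c` with
`c = w/(2Σ)`, which turns the Laplace transform into the integral over `(0, β)`; the latter
converges because `x^c/(1 − x)²` is continuous on `[0, β]`.
-/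

open Real MeasureTheory Filter

open Set Topology

theorem iteratedDeriv_two_log_cosh_add_sinh (p q s T : ℝ)
    (hT : p * cosh (s * T) + q * sinh (s * T) ≠ 0) :
    iteratedDeriv 2 (fun x => log (p * cosh (s * x) + q * sinh (s * x))) T
      = s ^ 2 * (p ^ 2 - q ^ 2) / (p * cosh (s * T) + q * sinh (s * T)) ^ 2 := by
  set f : ℝ → ℝ := fun x => p * cosh (s * x) + q * sinh (s * x)
  set f' : ℝ → ℝ := fun x => s * (p * sinh (s * x) + q * cosh (s * x))
  have hf : ∀ x, HasDerivAt f (f' x) x := fun x => by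
    have h := ((((hasDerivAt_id' x).const_mul s).cosh).const_mul p).add
      ((((hasDerivAt_id' x).const_mul s).sinh).const_mul q)
    exact h.congr_deriv (by simp only [f']; ring)
  have hf' : ∀ x, HasDerivAt f' (s ^ 2 * f x) x := fun x => by
    have h := (((((hasDerivAt_id' x).const_mul s).sinh).const_mul p).add
      ((((hasDerivAt_id' x).const_mul s).cosh).const_mul q)).const_mul s
    exact h.congr_deriv (by simp only [f]; ring)
  have hne : ∀ᶠ x in 𝓝 T, f x ≠ 0 :=
    (continuous_iff_continuousAt.mp (by fun_prop : Continuous f) T).eventually_ne hT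
  have hlog : deriv (fun x => log (f x)) =ᶠ[𝓝 T] fun x => f' x / f x :=
    hne.mono fun x hx => ((hf x).log hx).deriv
  rw [iteratedDeriv_succ, iteratedDeriv_one, hlog.deriv_eq]
  refine ((hf' T).div (hf T) hT).deriv.trans ?_
  have hnum : s ^ 2 * f T * f T - f' T * f' T = s ^ 2 * (p ^ 2 - q ^ 2) := by
    simp only [f, f']
    linear_combination s ^ 2 * (p ^ 2 - q ^ 2) * cosh_sq_sub_sinh_sq (s * T)
  rw [hnum]

theorem cosh_add_sinh_eq_exp_mul (p q s T : ℝ) (h : q + p ≠ 0) :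
    p * cosh (s * T) + q * sinh (s * T)
      = (q + p) / 2 * exp (s * T) * (1 - (q - p) / (q + p) * exp (-(2 * s) * T)) := by
  have hexp : exp (s * T) * exp (-(2 * s) * T) = exp (-(s * T)) := by
    rw [← exp_add]; ring_nf
  rw [cosh_eq, sinh_eq, ← hexp]
  field_simp
  ring

theorem Sg_pos {α : ℝ} (h1 : 1 / (2 * √3) < α) : 0 < Sg α := by
  have h3 : √3 ^ 2 = 3 := sq_sqrt (by norm_num)
  have hα : 1 < 2 * √3 * α := by
    rwa [div_lt_iff₀ (by positivity), mul_comm] at h1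
  exact sqrt_pos.mpr (by nlinarith)

theorem Sg_lt_self {α : ℝ} (h1 : 1 / (2 * √3) < α) (h2 : α < 1 / 2) : Sg α < α := by
  have hα : 0 < α := lt_trans (by positivity) h1
  exact (sqrt_lt' hα).mpr (by nlinarith)

section ExpSubstitution

variable {E : Type*} [NormedAddCommGroup E] [NormedSpace ℝ E] {β k : ℝ}

theorem image_mul_exp_neg_Ioi (hβ : 0 < β) (hk : 0 < k) :
    (fun T => β * exp (-k * T)) '' Ioi 0 = Ioo 0 β := by
  ext x
  constructor
  · rintro ⟨T, hT, rfl⟩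
    have : exp (-k * T) < 1 := exp_lt_one_iff.mpr (by nlinarith [mem_Ioi.mp hT])
    exact ⟨by positivity, mul_lt_of_lt_one_right hβ this⟩
  · rintro ⟨hx0, hxβ⟩
    refine ⟨log (β / x) / k, div_pos (log_pos ((one_lt_div hx0).mpr hxβ)) hk, ?_⟩
    dsimp only
    rw [show -k * (log (β / x) / k) = -log (β / x) by field_simp, exp_neg,
      exp_log (by positivity), inv_div, mul_div_cancel₀ _ hβ.ne']

theorem injOn_mul_exp_neg (hβ : 0 < β) (hk : 0 < k) :
    InjOn (fun T => β * exp (-k * T)) (Ioi 0) := fun _ _ _ _ h =>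
  mul_left_cancel₀ (neg_ne_zero.mpr hk.ne') (exp_injective (mul_left_cancel₀ hβ.ne' h))

theorem hasDerivAt_mul_exp_neg (β k T : ℝ) :
    HasDerivAt (fun T => β * exp (-k * T)) (-(k * (β * exp (-k * T)))) T := by
  have h := (((hasDerivAt_id' T).const_mul (-k)).exp).const_mul β
  exact h.congr_deriv (by ring)

theorem abs_deriv_mul_exp_neg (hβ : 0 < β) (hk : 0 < k) (T : ℝ) :
    |-(k * (β * exp (-k * T)))| = k * (β * exp (-k * T)) := by
  rw [abs_neg, abs_of_pos (by positivity)]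

theorem integral_comp_mul_exp_neg_Ioi (g : ℝ → E) (hβ : 0 < β) (hk : 0 < k) :
    ∫ T in Ioi 0, (k * (β * exp (-k * T))) • g (β * exp (-k * T)) = ∫ x in Ioo 0 β, g x := by
  rw [← image_mul_exp_neg_Ioi hβ hk, integral_image_eq_integral_abs_deriv_smul measurableSet_Ioi
    (fun T _ => (hasDerivAt_mul_exp_neg β k T).hasDerivWithinAt) (injOn_mul_exp_neg hβ hk)]
  simp only [abs_deriv_mul_exp_neg hβ hk]

theorem integrableOn_comp_mul_exp_neg_Ioi (g : ℝ → E) (hβ : 0 < β) (hk : 0 < k) :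
    IntegrableOn (fun T => (k * (β * exp (-k * T))) • g (β * exp (-k * T))) (Ioi 0)
      ↔ IntegrableOn g (Ioo 0 β) := by
  rw [← image_mul_exp_neg_Ioi hβ hk, integrableOn_image_iff_integrableOn_abs_deriv_smul
    measurableSet_Ioi (fun T _ => (hasDerivAt_mul_exp_neg β k T).hasDerivWithinAt)
    (injOn_mul_exp_neg hβ hk)]
  simp only [abs_deriv_mul_exp_neg hβ hk]

end ExpSubstitution

theorem integrableOn_rpow_div_one_sub_sq {β c : ℝ} (hβ : β < 1) (hc : 0 ≤ c) :
    IntegrableOn (fun x : ℝ => x ^ c / (1 - x) ^ 2) (Ioo 0 β) := by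
  refine (ContinuousOn.integrableOn_Icc ?_).mono_set Ioo_subset_Icc_self
  intro x hx
  have h1x : (1 - x) ^ 2 ≠ 0 := pow_ne_zero 2 (by linarith [hx.2])
  exact ((continuousAt_rpow_const x c (Or.inr hc)).div (by fun_prop) h1x).continuousWithinAt

theorem exp_neg_mul_eq_rpow {β k : ℝ} (hβ : 0 < β) (hk : k ≠ 0) (w T : ℝ) :
    exp (-w * T) = β ^ (-(w / k)) * (β * exp (-k * T)) ^ (w / k) := by
  rw [mul_rpow hβ.le (exp_pos _).le, ← mul_assoc, ← rpow_add hβ, neg_add_cancel, rpow_zero,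
    one_mul, ← exp_mul]
  congr 1
  field_simp

theorem iteratedDeriv_two_log_Cg_s12 {α T : ℝ} (hs : 0 < Sg α) (hsα : Sg α < α) (hT : 0 ≤ T) :
    iteratedDeriv 2 (fun x => log (Cg α x)) T
      = -4 * Sg α ^ 2 * ((α - Sg α) / (α + Sg α) * exp (-(2 * Sg α) * T))
          / (1 - (α - Sg α) / (α + Sg α) * exp (-(2 * Sg α) * T)) ^ 2 := by
  set s := Sg α
  have hx : (α - s) / (α + s) * exp (-(2 * s) * T) < 1 := by
    have hβ : (α - s) / (α + s) < 1 := (div_lt_one (by linarith)).mpr (by linarith)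
    have : exp (-(2 * s) * T) ≤ 1 := exp_le_one_iff.mpr (by nlinarith)
    nlinarith [exp_pos (-(2 * s) * T), div_pos (by linarith : 0 < α - s) (by linarith : 0 < α + s)]
  have hC := cosh_add_sinh_eq_exp_mul s α s T (by linarith)
  have hCne : s * cosh (s * T) + α * sinh (s * T) ≠ 0 := by
    rw [hC]
    exact (mul_pos (mul_pos (by linarith) (exp_pos _)) (by linarith)).ne'
  have hexp : exp (-(2 * s) * T) = (exp (s * T) ^ 2)⁻¹ := by
    rw [← exp_nat_mul, ← exp_neg]; ring_nf
  refine (iteratedDeriv_two_log_cosh_add_sinh s α s T hCne).trans ?_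
  rw [hC]
  have h1 : 1 - (α - s) / (α + s) * exp (-(2 * s) * T) ≠ 0 := by linarith
  have hαs : α + s ≠ 0 := by linarith
  rw [div_eq_div_iff (by positivity) (pow_ne_zero 2 h1), hexp]
  field_simp
  ring

/-- With `β = (α − Σ)/(α + Σ) ∈ (0,1)`: for every `w > 0` the integrals converge and
`∫₀^∞ e^{−wT} (log C)''(T) dT = −2Σ β^{−w/(2Σ)} ∫₀^β x^{w/(2Σ)}/(1 − x)² dx`. -/
theorem stmt12 (α : ℝ) (h1 : 1 / (2 * Real.sqrt 3) < α) (h2 : α < 1 / 2)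
    (β : ℝ) (hβ : β = (α - Sg α) / (α + Sg α)) :
    0 < β ∧ β < 1 ∧
    ∀ w : ℝ, 0 < w →
      IntegrableOn (fun T => Real.exp (-w * T)
          * iteratedDeriv 2 (fun x => Real.log (Cg α x)) T) (Set.Ioi 0) ∧
      IntegrableOn (fun x : ℝ => x ^ (w / (2 * Sg α)) / (1 - x) ^ 2) (Set.Ioo 0 β) ∧
      (∫ T in Set.Ioi (0 : ℝ),
          Real.exp (-w * T) * iteratedDeriv 2 (fun x => Real.log (Cg α x)) T)
        = -2 * Sg α * β ^ (-(w / (2 * Sg α)))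
            * ∫ x in Set.Ioo (0 : ℝ) β, x ^ (w / (2 * Sg α)) / (1 - x) ^ 2 := by
  have hs := Sg_pos h1
  have hsα := Sg_lt_self h1 h2
  have hβ0 : 0 < β := hβ ▸ div_pos (by linarith) (by linarith)
  have hβ1 : β < 1 := hβ ▸ (div_lt_one (by linarith)).mpr (by linarith)
  refine ⟨hβ0, hβ1, fun w hw => ?_⟩
  set c := w / (2 * Sg α)
  have hk : 0 < 2 * Sg α := by positivity
  have hG := integrableOn_rpow_div_one_sub_sq hβ1 (by positivity : 0 ≤ c)
  have hsubst : EqOn (fun T => exp (-w * T) * iteratedDeriv 2 (fun x => log (Cg α x)) T)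
      (fun T => -2 * Sg α * β ^ (-c) * ((2 * Sg α * (β * exp (-(2 * Sg α) * T))) •
        ((β * exp (-(2 * Sg α) * T)) ^ c / (1 - β * exp (-(2 * Sg α) * T)) ^ 2))) (Ioi 0) := by
    intro T hT
    simp only [smul_eq_mul]
    rw [iteratedDeriv_two_log_Cg_s12 hs hsα (le_of_lt hT), ← hβ, exp_neg_mul_eq_rpow hβ0 hk.ne']
    ring
  refine ⟨?_, hG, ?_⟩
  · exact IntegrableOn.congr_fun
      (((integrableOn_comp_mul_exp_neg_Ioi _ hβ0 hk).mpr hG).const_mul _) hsubst.symm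
      measurableSet_Ioi
  · rw [setIntegral_congr_fun measurableSet_Ioi hsubst, integral_const_mul]
    exact congrArg _ (integral_comp_mul_exp_neg_Ioi (fun x => x ^ c / (1 - x) ^ 2) hβ0 hk)
end
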